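/- arXiv:1703.10015 — 3 statements merged into one kernel-verified Lean document; each statement's English description precedes it below -/
import Mathlib

section
/- Let (R_j) be a sequence of l-dimensional affine subspaces of ℝ^k with k = m + l, and let Υ_j, Υ'_j be nonnegative sequences tending to 0 with Υ_j ≍ Υ'_j (the ratio Υ_j/Υ'_j bounded between two positive constants for all large j). Then the limsup sets Λ(Υ) := limsup_j Δ(R_j, Υ_j) and Λ(Υ') := limsup_j Δ(R_j, Υ'_j) have the same k-dimensional Lebesgue measure on every ball: for every ball B ⊆ ℝ^k, H^k(B ∩ Λ(Υ)) = H^k(B ∩ Λ(Υ')). -/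
open Set Metric MeasureTheory Filter
open scoped ENNReal Topology

variable {k : ℕ}

/-- auxiliary: limsup sets are measurable -/
lemma measurableSet_limsupSet (S : ℕ → Set (EuclideanSpace ℝ (Fin k))) (f : ℕ → ℝ) :
    MeasurableSet {y | {j | Metric.infDist y (S j) < f j}.Infinite} := by
  have : {y | {j | Metric.infDist y (S j) < f j}.Infinite}
      = ⋂ n, ⋃ j, ⋃ (_ : n ≤ j), {y | Metric.infDist y (S j) < f j} := by
    ext y
    simp only [mem_setOf_eq, mem_iInter, mem_iUnion, ← Nat.frequently_atTop_iff_infinite,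
      frequently_atTop, exists_prop]
  rw [this]
  exact MeasurableSet.iInter fun n => MeasurableSet.iUnion fun j => MeasurableSet.iUnion
    fun _ => (isOpen_lt (continuous_infDist_pt _) continuous_const).measurableSet

/-- eventual domination of radii gives inclusion of limsup sets -/
lemma limsupSet_subset (S : ℕ → Set (EuclideanSpace ℝ (Fin k))) (f g : ℕ → ℝ) (N : ℕ)
    (h : ∀ j, N ≤ j → f j ≤ g j) :
    {y | {j | Metric.infDist y (S j) < f j}.Infinite}
      ⊆ {y | {j | Metric.infDist y (S j) < g j}.Infinite} := by
  intro y hy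
  have : ({j | Metric.infDist y (S j) < f j} \ {j | j < N})
      ⊆ {j | Metric.infDist y (S j) < g j} := by
    rintro j ⟨hj1, hj2⟩
    exact lt_of_lt_of_le hj1 (h j (not_lt.1 hj2))
  exact Set.Infinite.mono this (hy.diff (Set.finite_lt_nat N))

/-- Core lemma: enlarging the radii by a factor `C ≥ 1` does not add positive measure. -/
lemma null_diff (S : ℕ → Set (EuclideanSpace ℝ (Fin k))) (δ : ℕ → ℝ)
    (hδ : Tendsto δ atTop (nhds 0)) (C : ℝ) (hC : 1 ≤ C) :
    volume ({y | {j | Metric.infDist y (S j) < C * δ j}.Infinite}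
      \ {y | {j | Metric.infDist y (S j) < δ j}.Infinite}) = 0 := by
  classical
  set d := Module.finrank ℝ (EuclideanSpace ℝ (Fin k)) with hd
  have hC0 : (0:ℝ) < C := lt_of_lt_of_le one_pos hC
  set θ : ℝ := ((4*C)⁻¹) ^ d with hθdef
  have hθpos : 0 < θ := pow_pos (by positivity) _
  have hθle : θ ≤ 1 := pow_le_one₀ (by positivity) (by
    rw [inv_le_one_iff₀]; right; linarith)
  set θ₁ : ℝ≥0∞ := ENNReal.ofReal (1 - θ) with hθ₁def
  have hθ₁lt : θ₁ < 1 := by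
    rw [hθ₁def, ← ENNReal.ofReal_one]
    exact ENNReal.ofReal_lt_ofReal_iff_of_nonneg (by linarith) |>.2 (by linarith)
  -- decompose the complement of the smaller limsup set
  have hdecomp : {y : EuclideanSpace ℝ (Fin k) |
      {j | Metric.infDist y (S j) < δ j}.Infinite}ᶜ
      = ⋃ n, {y | ∀ j, n ≤ j → δ j ≤ Metric.infDist y (S j)} := by
    ext y
    simp only [mem_compl_iff, mem_setOf_eq, mem_iUnion, ← Nat.frequently_atTop_iff_infinite,
      not_frequently, eventually_atTop, not_lt]
  have : ({y : EuclideanSpace ℝ (Fin k) | {j | Metric.infDist y (S j) < C * δ j}.Infinite}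
      \ {y | {j | Metric.infDist y (S j) < δ j}.Infinite})
      ⊆ ⋃ n, ({y | {j | Metric.infDist y (S j) < C * δ j}.Infinite}
        ∩ {y | ∀ j, n ≤ j → δ j ≤ Metric.infDist y (S j)}) := by
    intro y hy
    rw [Set.mem_diff, ← Set.mem_compl_iff, hdecomp] at hy
    obtain ⟨h1, n, h2⟩ := hy.imp id Set.mem_iUnion.1
    exact Set.mem_iUnion.2 ⟨n, h1, h2⟩
  refine measure_mono_null this (measure_iUnion_null fun n => ?_)
  set E : Set (EuclideanSpace ℝ (Fin k)) :=
    {y | {j | Metric.infDist y (S j) < C * δ j}.Infinite}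
      ∩ {y | ∀ j, n ≤ j → δ j ≤ Metric.infDist y (S j)} with hEdef
  have hEmeas : MeasurableSet E := by
    apply (measurableSet_limsupSet S _).inter
    have : {y : EuclideanSpace ℝ (Fin k) | ∀ j, n ≤ j → δ j ≤ Metric.infDist y (S j)}
        = ⋂ j, ⋂ (_ : n ≤ j), {y | δ j ≤ Metric.infDist y (S j)} := by
      ext y; simp
    rw [this]
    exact MeasurableSet.iInter fun j => MeasurableSet.iInter fun _ =>
      (isClosed_le continuous_const (continuous_infDist_pt _)).measurableSet
  by_contra hE0
  -- density point
  obtain ⟨x₀, hx₀E, hx₀⟩ : ∃ x₀ ∈ E, Tendsto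
      (fun r => volume (E ∩ closedBall x₀ r) / volume (closedBall x₀ r)) (𝓝[>] 0)
      (𝓝 (E.indicator 1 x₀)) := by
    by_contra h
    push_neg at h
    have hae := Besicovitch.ae_tendsto_measure_inter_div_of_measurableSet
      (volume : Measure (EuclideanSpace ℝ (Fin k))) hEmeas
    rw [MeasureTheory.ae_iff] at hae
    exact hE0 (measure_mono_null (fun z hz => h z hz) hae)
  rw [Set.indicator_of_mem hx₀E] at hx₀
  have hx₀' : Tendsto
      (fun r => volume (E ∩ closedBall x₀ r) / volume (closedBall x₀ r)) (𝓝[>] 0)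
      (𝓝 1) := by simpa using hx₀
  -- from the tendsto, get ρ
  obtain ⟨ρ, hρ0, hρ⟩ : ∃ ρ ∈ Ioi (0:ℝ), Ioo (0:ℝ) ρ ⊆
      {s : ℝ | θ₁ < volume (E ∩ closedBall x₀ s) / volume (closedBall x₀ s)} :=
    mem_nhdsGT_iff_exists_Ioo_subset.1 (hx₀'.eventually (eventually_gt_nhds hθ₁lt))
  -- pick a suitable index j
  obtain ⟨hx₀Λ, hx₀F⟩ := hx₀E
  obtain ⟨M, hM⟩ : ∃ M, ∀ j ≥ M, |δ j| < ρ / (2*C) := by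
    have hρpos : 0 < ρ := mem_Ioi.1 hρ0
    have := (Metric.tendsto_atTop.1 hδ) (ρ / (2*C)) (by positivity)
    simpa [Real.dist_eq] using this
  obtain ⟨j, hjT, hjge⟩ := Set.infinite_iff_exists_gt.1 hx₀Λ (max n M)
  have hjn : n ≤ j := le_of_lt (lt_of_le_of_lt (le_max_left _ _) hjge)
  have hjM : M ≤ j := le_of_lt (lt_of_le_of_lt (le_max_right _ _) hjge)
  have hj : Metric.infDist x₀ (S j) < C * δ j := hjT
  have hδj : 0 < δ j := by
    by_contra h
    push_neg at h
    have : C * δ j ≤ 0 := mul_nonpos_of_nonneg_of_nonpos hC0.le h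
    exact absurd (lt_of_le_of_lt Metric.infDist_nonneg hj) (not_lt.2 this)
  have hFj : δ j ≤ Metric.infDist x₀ (S j) := hx₀F j hjn
  have hSne : (S j).Nonempty := by
    rcases Set.eq_empty_or_nonempty (S j) with h | h
    · rw [h, Metric.infDist_empty] at hFj; linarith
    · exact h
  obtain ⟨y, hyS, hy⟩ := (Metric.infDist_lt_iff hSne).1 hj
  set r : ℝ := 2 * C * δ j with hrdef
  have hr0 : 0 < r := by positivity
  have hrρ : r < ρ := by
    have h1 : δ j ≤ |δ j| := le_abs_self _
    have h2 : |δ j| < ρ / (2*C) := hM j hjM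
    calc r = 2 * C * δ j := rfl
      _ ≤ 2 * C * |δ j| := by nlinarith
      _ < 2 * C * (ρ / (2*C)) := by nlinarith
      _ = ρ := by field_simp
  -- the small ball inside the neighborhood, inside the big ball, disjoint from E
  have hsub1 : closedBall y (δ j / 2) ⊆ closedBall x₀ r := by
    intro z hz
    rw [Metric.mem_closedBall] at hz ⊢
    have h1 : dist z x₀ ≤ dist z y + dist y x₀ := dist_triangle _ _ _
    have h2 : dist y x₀ ≤ C * δ j := by rw [dist_comm]; exact hy.le
    have hCd : δ j / 2 ≤ C * δ j / 2 := by nlinarith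
    calc dist z x₀ ≤ δ j / 2 + C * δ j := by linarith
      _ ≤ 2 * C * δ j := by nlinarith
  have hsub2 : E ∩ closedBall x₀ r ⊆ closedBall x₀ r \ closedBall y (δ j / 2) := by
    rintro z ⟨hzE, hzB⟩
    refine ⟨hzB, fun hzb => ?_⟩
    have h1 : Metric.infDist z (S j) ≤ dist z y := Metric.infDist_le_dist_of_mem hyS
    have h2 : dist z y ≤ δ j / 2 := hzb
    have h3 : δ j ≤ Metric.infDist z (S j) := hzE.2 j hjn
    linarith
  -- measure computation
  set v : ℝ≥0∞ := volume (ball (0 : EuclideanSpace ℝ (Fin k)) 1) with hvdef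
  have hvol1 : volume (closedBall x₀ r) = ENNReal.ofReal (r ^ d) * v :=
    Measure.addHaar_closedBall _ _ hr0.le
  have hvol2 : volume (closedBall y (δ j / 2)) = ENNReal.ofReal ((δ j / 2) ^ d) * v :=
    Measure.addHaar_closedBall _ _ (by positivity)
  have hhalf : (δ j / 2) ^ d = θ * r ^ d := by
    rw [hθdef, ← mul_pow]
    congr 1
    field_simp
    ring
  have key : θ₁ * volume (closedBall x₀ r) + volume (closedBall y (δ j / 2))
      = volume (closedBall x₀ r) := by
    rw [hvol1, hvol2, hθ₁def, ← mul_assoc, ← ENNReal.ofReal_mul (by linarith),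
      ← add_mul, ← ENNReal.ofReal_add (mul_nonneg (by linarith) (by positivity)) (by positivity)]
    congr 2
    rw [hhalf]; ring
  have hsmall_fin : volume (closedBall y (δ j / 2)) ≠ ∞ := measure_closedBall_lt_top.ne
  have hdiff : volume (closedBall x₀ r \ closedBall y (δ j / 2))
      = θ₁ * volume (closedBall x₀ r) := by
    rw [measure_diff hsub1 measurableSet_closedBall.nullMeasurableSet hsmall_fin]
    nth_rewrite 1 [← key]
    exact ENNReal.add_sub_cancel_right hsmall_fin
  have hle : volume (E ∩ closedBall x₀ r) ≤ θ₁ * volume (closedBall x₀ r) := by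
    rw [← hdiff]; exact measure_mono hsub2
  have hratio : volume (E ∩ closedBall x₀ r) / volume (closedBall x₀ r) ≤ θ₁ :=
    ENNReal.div_le_of_le_mul hle
  exact absurd (hρ ⟨hr0, hrρ⟩) (not_lt.2 hratio)

/-- If `Υ_j ≍ Υ'_j` (comparable for all large `j`) and both tend to `0`, then the limsup
sets of the neighborhoods `Δ(R_j, Υ_j)` and `Δ(R_j, Υ'_j)` have the same Lebesgue measure
on every ball. -/
theorem stmt6 {k l : ℕ} (R : ℕ → AffineSubspace ℝ (EuclideanSpace ℝ (Fin k)))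
    (hRdim : ∀ j, Module.finrank ℝ (R j).direction = l)
    (Υ Υ' : ℕ → ℝ) (hΥ0 : ∀ j, 0 ≤ Υ j) (hΥ'0 : ∀ j, 0 ≤ Υ' j)
    (hlim : Tendsto Υ atTop (nhds 0)) (hlim' : Tendsto Υ' atTop (nhds 0))
    (c₁ c₂ : ℝ) (hc₁ : 0 < c₁) (hc₂ : 0 < c₂) (N : ℕ)
    (hcomp : ∀ j, N ≤ j → c₁ * Υ' j ≤ Υ j ∧ Υ j ≤ c₂ * Υ' j)
    (x : EuclideanSpace ℝ (Fin k)) (rad : ℝ) :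
    volume (Metric.ball x rad ∩
        {y | {j | Metric.infDist y ((R j : Set (EuclideanSpace ℝ (Fin k)))) < Υ j}.Infinite}) =
      volume (Metric.ball x rad ∩
        {y | {j | Metric.infDist y ((R j : Set (EuclideanSpace ℝ (Fin k)))) < Υ' j}.Infinite}) := by
  classical
  set S : ℕ → Set (EuclideanSpace ℝ (Fin k)) := fun j => (R j : Set (EuclideanSpace ℝ (Fin k)))
    with hSdef
  -- generic one-sided estimate
  have main : ∀ (f g : ℕ → ℝ), (∀ j, 0 ≤ g j) → Tendsto g atTop (nhds 0) →
      ∀ (c : ℝ), 0 < c → (∀ j, N ≤ j → f j ≤ c * g j) →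
      volume (Metric.ball x rad ∩ {y | {j | Metric.infDist y (S j) < f j}.Infinite})
        ≤ volume (Metric.ball x rad ∩ {y | {j | Metric.infDist y (S j) < g j}.Infinite}) := by
    intro f g hg0 hg c hc hfg
    set C : ℝ := max c 1 with hCdef
    have hC1 : 1 ≤ C := le_max_right _ _
    have hsub : {y | {j | Metric.infDist y (S j) < f j}.Infinite}
        ⊆ {y | {j | Metric.infDist y (S j) < C * g j}.Infinite} := by
      apply limsupSet_subset S f _ N
      intro j hj
      exact (hfg j hj).trans (mul_le_mul_of_nonneg_right (le_max_left _ _) (hg0 j))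
    have hnull := null_diff S g hg C hC1
    calc volume (Metric.ball x rad ∩ {y | {j | Metric.infDist y (S j) < f j}.Infinite})
        ≤ volume ((Metric.ball x rad ∩ {y | {j | Metric.infDist y (S j) < g j}.Infinite})
          ∪ ({y | {j | Metric.infDist y (S j) < C * g j}.Infinite}
            \ {y | {j | Metric.infDist y (S j) < g j}.Infinite})) := by
          apply measure_mono
          rintro z ⟨hzb, hz⟩
          by_cases hz' : z ∈ {y | {j | Metric.infDist y (S j) < g j}.Infinite}
          · exact Or.inl ⟨hzb, hz'⟩
          · exact Or.inr ⟨hsub hz, hz'⟩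
      _ ≤ volume (Metric.ball x rad ∩ {y | {j | Metric.infDist y (S j) < g j}.Infinite})
          + volume ({y | {j | Metric.infDist y (S j) < C * g j}.Infinite}
            \ {y | {j | Metric.infDist y (S j) < g j}.Infinite}) := measure_union_le _ _
      _ = volume (Metric.ball x rad ∩ {y | {j | Metric.infDist y (S j) < g j}.Infinite}) := by
          rw [hnull, add_zero]
  refine le_antisymm (main Υ Υ' hΥ'0 hlim' c₂ hc₂ fun j hj => (hcomp j hj).2) ?_
  refine main Υ' Υ hΥ0 hlim c₁⁻¹ (by positivity) fun j hj => ?_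
  have h := (hcomp j hj).1
  rw [inv_mul_eq_div, le_div_iff₀' hc₁]
  exact h
end

section
/- For an n×m real matrix x, (p,q) ∈ ℤ^m × ℤ^n \ {0}, and the affine subspace R_{p,q} := { x ∈ ℝ^{nm} : qx + p = 0 } of ℝ^{nm}, the distance from x to R_{p,q} with respect to the norm ‖x‖ = √n · max_{1≤ℓ≤m} |x_ℓ|₂ (where x_ℓ are the columns of x) equals √n · |qx + p| / |q|₂, where |·| is the supremum norm on ℝ^m and |q|₂ is the Euclidean norm of q. -/
open Set Metric Filter

/-- The norm `‖x‖ = √n · max_ℓ |x_ℓ|₂` on `ℝ^{nm}` (viewed as `n × m` matrices, `x_ℓ`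
being the columns). -/
noncomputable def specialNorm (n m : ℕ) (x : Fin n → Fin m → ℝ) : ℝ :=
  Real.sqrt n * ⨆ ℓ : Fin m, Real.sqrt (∑ i, (x i ℓ) ^ 2)

/-- The affine subspace `R_{p,q} = {x : qx + p = 0}` of `ℝ^{nm}`, as a set. -/
def planeSet (n m : ℕ) (p : Fin m → ℤ) (q : Fin n → ℤ) : Set (Fin n → Fin m → ℝ) :=
  {x | ∀ ℓ, ∑ i, (q i : ℝ) * x i ℓ + (p ℓ : ℝ) = 0}

/-- The distance from `x` to the set `S` with respect to `specialNorm`. -/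
noncomputable def specialDist (n m : ℕ) (x : Fin n → Fin m → ℝ)
    (S : Set (Fin n → Fin m → ℝ)) : ℝ :=
  sInf ((fun y => specialNorm n m (x - y)) '' S)

/-!
Each column is handled separately. If `z ∈ R_{p,q}`, the `ℓ`-th column `v` of `x - z` satisfies
`q · v = (qx + p)_ℓ`, so by Cauchy–Schwarz `|v|₂ ≥ |(qx + p)_ℓ| / |q|₂`. Equality holds for the
orthogonal projection, `v = (qx + p)_ℓ · q / |q|₂²`, and taking these columns for all `ℓ` at
once gives a point of `R_{p,q}` attaining the bound in every column, hence in the maximum.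
-/

section Hyperplane

variable {ι : Type*} [Fintype ι]

lemma abs_sum_mul_le_sqrt_mul_sqrt (f g : ι → ℝ) :
    |∑ i, f i * g i| ≤ √(∑ i, f i ^ 2) * √(∑ i, g i ^ 2) :=
  (Real.abs_le_sqrt (Finset.sum_mul_sq_le_sq_mul_sq _ _ _)).trans_eq <|
    Real.sqrt_mul (Finset.sum_nonneg fun _ _ ↦ sq_nonneg _) _

lemma sum_sq_pos_of_ne_zero {f : ι → ℝ} (hf : f ≠ 0) : 0 < ∑ i, f i ^ 2 := by
  obtain ⟨i, hi⟩ := Function.ne_iff.mp hf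
  exact Finset.sum_pos' (fun j _ ↦ sq_nonneg (f j))
    ⟨i, Finset.mem_univ i, pow_two_pos_of_ne_zero hi⟩

lemma sum_mul_mul_div_sum_sq (f : ι → ℝ) (c : ℝ) (hf : ∑ i, f i ^ 2 ≠ 0) :
    ∑ i, f i * (f i * c / ∑ j, f j ^ 2) = c := by
  simp_rw [mul_div_assoc, ← mul_assoc, ← sq, ← Finset.sum_mul]
  field_simp

lemma sqrt_sum_sq_mul_div_sum_sq (f : ι → ℝ) (c : ℝ) (hf : 0 < ∑ i, f i ^ 2) :
    √(∑ i, (f i * c / ∑ j, f j ^ 2) ^ 2) = |c| / √(∑ i, f i ^ 2) := by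
  set S := ∑ i, f i ^ 2
  have hsum : ∑ i, (f i * c / S) ^ 2 = (c / √S) ^ 2 := by
    simp_rw [mul_div_assoc, mul_pow, ← Finset.sum_mul, div_pow, Real.sq_sqrt hf.le]
    field_simp
    ring
  rw [hsum, Real.sqrt_sq_eq_abs, abs_div, abs_of_nonneg (Real.sqrt_nonneg S)]

end Hyperplane

section PlaneDistance

variable {n m : ℕ} (p : Fin m → ℤ) (q : Fin n → ℤ) (x : Fin n → Fin m → ℝ)

def planeResidual (ℓ : Fin m) : ℝ :=
  ∑ i, (q i : ℝ) * x i ℓ + p ℓ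

variable {p q x}

lemma sum_mul_sub_eq_planeResidual {z : Fin n → Fin m → ℝ} (hz : z ∈ planeSet n m p q)
    (ℓ : Fin m) : ∑ i, (q i : ℝ) * (x - z) i ℓ = planeResidual p q x ℓ := by
  simp only [Pi.sub_apply, mul_sub, Finset.sum_sub_distrib, planeResidual]
  linarith [hz ℓ]

lemma sum_intCast_sq_pos (hq : q ≠ 0) : 0 < ∑ i, ((q i : ℝ)) ^ 2 :=
  sum_sq_pos_of_ne_zero fun h ↦ hq <| funext fun i ↦ by simpa using congr_fun h i

lemma le_specialNorm_sub_of_mem_planeSet (hq : q ≠ 0) {z : Fin n → Fin m → ℝ}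
    (hz : z ∈ planeSet n m p q) :
    √n * (⨆ ℓ, |planeResidual p q x ℓ|) / √(∑ i, ((q i : ℝ)) ^ 2) ≤
      specialNorm n m (x - z) := by
  have hQ := Real.sqrt_pos.mpr (sum_intCast_sq_pos hq)
  have hcol : ∀ ℓ, |planeResidual p q x ℓ| ≤
      √(∑ i, ((q i : ℝ)) ^ 2) * ⨆ ℓ, √(∑ i, ((x - z) i ℓ) ^ 2) := fun ℓ ↦ calc
    _ = |∑ i, (q i : ℝ) * (x - z) i ℓ| := by rw [sum_mul_sub_eq_planeResidual hz]
    _ ≤ √(∑ i, ((q i : ℝ)) ^ 2) * √(∑ i, ((x - z) i ℓ) ^ 2) :=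
      abs_sum_mul_le_sqrt_mul_sqrt _ _
    _ ≤ _ := by
      gcongr
      exact le_ciSup (Finite.bddAbove_range fun ℓ ↦ √(∑ i, ((x - z) i ℓ) ^ 2)) ℓ
  have hsup := Real.iSup_le hcol <|
    mul_nonneg hQ.le (Real.iSup_nonneg fun ℓ ↦ Real.sqrt_nonneg _)
  rw [mul_div_assoc, specialNorm]
  gcongr
  rwa [div_le_iff₀' hQ]

variable (p q x) in
noncomputable def planeProjection : Fin n → Fin m → ℝ :=
  x - fun i ℓ ↦ q i * planeResidual p q x ℓ / ∑ j, ((q j : ℝ)) ^ 2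

lemma planeProjection_mem_planeSet (hq : q ≠ 0) : planeProjection p q x ∈ planeSet n m p q := by
  intro ℓ
  have h := sum_mul_mul_div_sum_sq (fun i ↦ (q i : ℝ)) (planeResidual p q x ℓ)
    (sum_intCast_sq_pos hq).ne'
  simp only [planeProjection, Pi.sub_apply, mul_sub, Finset.sum_sub_distrib] at h ⊢
  rw [h, planeResidual]
  ring

lemma specialNorm_sub_planeProjection_le (hq : q ≠ 0) :
    specialNorm n m (x - planeProjection p q x) ≤
      √n * (⨆ ℓ, |planeResidual p q x ℓ|) / √(∑ i, ((q i : ℝ)) ^ 2) := by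
  have hS := sum_intCast_sq_pos hq
  rw [mul_div_assoc, specialNorm]
  gcongr
  refine Real.iSup_le (fun ℓ ↦ ?_) <|
    div_nonneg (Real.iSup_nonneg fun ℓ ↦ abs_nonneg _) (Real.sqrt_nonneg _)
  rw [planeProjection, sub_sub_cancel, sqrt_sum_sq_mul_div_sum_sq (fun i ↦ (q i : ℝ)) _ hS]
  gcongr
  exact le_ciSup (Finite.bddAbove_range fun ℓ ↦ |planeResidual p q x ℓ|) ℓ

end PlaneDistance

theorem stmt13_general (n m : ℕ)
    (p : Fin m → ℤ) (q : Fin n → ℤ) (hq : q ≠ 0) (x : Fin n → Fin m → ℝ) :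
    specialDist n m x (planeSet n m p q) =
      Real.sqrt n * (⨆ ℓ : Fin m, |∑ i, (q i : ℝ) * x i ℓ + (p ℓ : ℝ)|) /
        Real.sqrt (∑ i, ((q i : ℝ)) ^ 2) := by
  unfold specialDist
  have hproj := planeProjection_mem_planeSet (p := p) (x := x) hq
  refine IsLeast.csInf_eq ⟨⟨_, hproj, le_antisymm (specialNorm_sub_planeProjection_le hq)
    (le_specialNorm_sub_of_mem_planeSet hq hproj)⟩, ?_⟩
  rintro _ ⟨z, hz, rfl⟩
  exact le_specialNorm_sub_of_mem_planeSet hq hz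

/-- The distance from `x` to `R_{p,q}` with respect to the norm
`‖x‖ = √n max_ℓ |x_ℓ|₂` equals `√n |qx + p| / |q|₂`. -/
theorem stmt13 (n m : ℕ) (hn : 1 ≤ n) (hm : 1 ≤ m)
    (p : Fin m → ℤ) (q : Fin n → ℤ) (hq : q ≠ 0) (x : Fin n → Fin m → ℝ) :
    specialDist n m x (planeSet n m p q) =
      Real.sqrt n * (⨆ ℓ : Fin m, |∑ i, (q i : ℝ) * x i ℓ + (p ℓ : ℝ)|) /
        Real.sqrt (∑ i, ((q i : ℝ)) ^ 2) :=
  stmt13_general n m p q hq x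
end

section
/- Let g be a dimension function and ψ : ℕ → ℝ⁺. If the sequence q ↦ q^{n+m−1} g(ψ(q)/q) is non-increasing and ψ(q)/q does not tend to 0 as q → ∞, then there is ε > 0 with g(r) = 0 for all r ≤ ε; consequently, for any dimension function f with f(r) = r^{m(n−1)} g(r), H^f(X) = 0 for every X ⊆ [0,1]^{nm}. -/
open Set Metric MeasureTheory Filter

/-- A dimension function: nonnegative, non-decreasing, left continuous on positives,
tending to `0` at `0`. -/
def IsDimensionFunction (f : ℝ → ℝ) : Prop :=
  (∀ r, 0 < r → 0 ≤ f r) ∧ MonotoneOn f (Set.Ioi 0) ∧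
  (∀ r, 0 < r → ContinuousWithinAt f (Set.Iio r) r) ∧
  Filter.Tendsto f (nhdsWithin 0 (Set.Ioi 0)) (nhds 0)

/-- Hausdorff measure with respect to a dimension function `f`. -/
noncomputable def hausdorffF {X : Type*} [PseudoMetricSpace X] (f : ℝ → ℝ) (F : Set X) :
    ENNReal :=
  ⨆ (ρ : ℝ) (_ : 0 < ρ),
    ⨅ (c : ℕ → X) (r : ℕ → ℝ) (_ : ∀ i, 0 < r i ∧ r i ≤ ρ)
      (_ : F ⊆ ⋃ i, Metric.ball (c i) (r i)),
      ∑' i, ENNReal.ofReal (f (r i))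

/-- The unit cube `[0,1]^{nm}`, viewed as `n × m` matrices. -/
def unitCube (n m : ℕ) : Set (Fin n → Fin m → ℝ) :=
  {x | ∀ i ℓ, x i ℓ ∈ Set.Icc (0 : ℝ) 1}

/-- The supremum norm `|q|` of an integer vector, as a natural number. -/
def qnorm {n : ℕ} (q : Fin n → ℤ) : ℕ :=
  Finset.univ.sup fun i => (q i).natAbs

/-- The inhomogeneous set `A^y_{n,m}(Ψ)` for a multivariable approximating function
`Ψ : ℤ^n ∖ {0} → ℝ⁺`: points `x ∈ [0,1]^{nm}` with `|qx + p − y| < Ψ(q)` for infinitely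
many `(p,q) ∈ ℤ^m × ℤ^n ∖ {0}`. -/
def approxSetInhomQ (n m : ℕ) (Ψ : (Fin n → ℤ) → ℝ) (y : Fin m → ℝ) :
    Set (Fin n → Fin m → ℝ) :=
  {x | x ∈ unitCube n m ∧
    {pq : (Fin m → ℤ) × (Fin n → ℤ) | pq ≠ 0 ∧
      ∀ ℓ, |∑ i, (pq.2 i : ℝ) * x i ℓ + (pq.1 ℓ : ℝ) - y ℓ| < Ψ pq.2}.Infinite}

/-!
Since `ψ(q)/q ↛ 0`, there is `ε > 0` with `ψ(q)/q ≥ ε` for infinitely many `q`. For `0 < r ≤ ε`,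
monotonicity of `g` and the hypothesis give `q^{n+m-1} g(r) ≤ q^{n+m-1} g(ψ(q)/q) ≤ g(ψ(1))` for
all those `q`, which forces `g(r) = 0`. Then `f` vanishes on `(0, ε]`, and covering the whole
(separable) space by countably many balls of an arbitrarily small radius `δ ≤ ε` costs nothing.
-/

theorem frequently_le_of_not_tendsto_zero {α : Type*} {l : Filter α} {u : α → ℝ} (hu : 0 ≤ u)
    (h : ¬ Tendsto u l (nhds 0)) : ∃ ε > 0, ∃ᶠ x in l, ε ≤ u x := by
  simp only [Metric.tendsto_nhds, Real.dist_eq, sub_zero, not_forall, not_eventually,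
    not_lt] at h
  obtain ⟨ε, hε, hfreq⟩ := h
  exact ⟨ε, hε, hfreq.mono fun x hx => by rwa [abs_of_nonneg (hu x)] at hx⟩

theorem eq_zero_of_frequently_pow_mul_le {k : ℕ} (hk : k ≠ 0) {c C : ℝ} (hc : 0 ≤ c)
    (h : ∃ᶠ q : ℕ in atTop, (q : ℝ) ^ k * c ≤ C) : c = 0 := by
  by_contra hne
  have hgrowth : Tendsto (fun q : ℕ => (q : ℝ) ^ k * c) atTop atTop :=
    ((tendsto_pow_atTop hk).comp tendsto_natCast_atTop_atTop).atTop_mul_const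
      (lt_of_le_of_ne hc (Ne.symm hne))
  exact h ((hgrowth.eventually_gt_atTop C).mono fun q hq => not_le.mpr hq)

theorem exists_forall_eq_zero_of_antitone_pow_mul {g : ℝ → ℝ} (hg0 : ∀ r, 0 < r → 0 ≤ g r)
    (hgmono : MonotoneOn g (Ioi 0)) {u : ℕ → ℝ} (hu : 0 ≤ u)
    (hnot : ¬ Tendsto u atTop (nhds 0)) {k : ℕ} (hk : k ≠ 0)
    (hanti : ∀ a b : ℕ, 1 ≤ a → a ≤ b → (b : ℝ) ^ k * g (u b) ≤ (a : ℝ) ^ k * g (u a)) :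
    ∃ ε > 0, ∀ r, 0 < r → r ≤ ε → g r = 0 := by
  obtain ⟨ε, hε, hfreq⟩ := frequently_le_of_not_tendsto_zero hu hnot
  refine ⟨ε, hε, fun r hr hrε => eq_zero_of_frequently_pow_mul_le hk (hg0 r hr)
    (C := ((1 : ℕ) : ℝ) ^ k * g (u 1)) ?_⟩
  refine (hfreq.and_eventually (eventually_ge_atTop 1)).mono fun q ⟨hεq, hq⟩ => ?_
  calc (q : ℝ) ^ k * g r ≤ (q : ℝ) ^ k * g (u q) :=
        mul_le_mul_of_nonneg_left (hgmono hr (hε.trans_le hεq) (hrε.trans hεq)) (by positivity)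
    _ ≤ ((1 : ℕ) : ℝ) ^ k * g (u 1) := hanti 1 q le_rfl hq

theorem hausdorffF_eq_zero_of_eq_zero {X : Type*} [PseudoMetricSpace X]
    [TopologicalSpace.SeparableSpace X] [Nonempty X] {f : ℝ → ℝ} {ε : ℝ} (hε : 0 < ε)
    (hf : ∀ r, 0 < r → r ≤ ε → f r = 0) (F : Set X) : hausdorffF f F = 0 := by
  refine le_antisymm (iSup₂_le fun ρ hρ => ?_) zero_le
  set δ := min ρ ε
  have hδ : 0 < δ := lt_min hρ hε
  have hcover : F ⊆ ⋃ i, ball (TopologicalSpace.denseSeq X i) δ := fun x _ => by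
    obtain ⟨i, hi⟩ := denseRange_iff.mp (TopologicalSpace.denseRange_denseSeq X) x δ hδ
    exact mem_iUnion.mpr ⟨i, mem_ball.mpr hi⟩
  refine (iInf₂_le (TopologicalSpace.denseSeq X) (fun _ => δ)).trans ?_
  refine (iInf₂_le (fun _ => ⟨hδ, min_le_left ρ ε⟩) hcover).trans ?_
  simp [hf δ hδ (min_le_right ρ ε)]

/-- If `q ↦ q^{n+m−1} g(ψ(q)/q)` is non-increasing and `ψ(q)/q ↛ 0`, then `g` vanishes
on an interval `(0, ε]`; consequently `H^f(X) = 0` for every `X ⊆ [0,1]^{nm}` whenever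
`f(r) = r^{m(n−1)} g(r)`. -/
theorem stmt19 (n m : ℕ) (hn : 1 ≤ n) (hm : 1 ≤ m)
    (g : ℝ → ℝ) (hg : IsDimensionFunction g)
    (ψ : ℕ → ℝ) (hψ : ∀ r, 0 ≤ ψ r)
    (hmono : ∀ a b : ℕ, 1 ≤ a → a ≤ b →
      (b : ℝ) ^ (n + m - 1) * g (ψ b / b) ≤ (a : ℝ) ^ (n + m - 1) * g (ψ a / a))
    (hnot : ¬ Tendsto (fun q : ℕ => ψ q / (q : ℝ)) atTop (nhds 0)) :
    ∃ ε : ℝ, 0 < ε ∧ (∀ r : ℝ, 0 < r → r ≤ ε → g r = 0) ∧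
      ∀ f : ℝ → ℝ, (∀ r : ℝ, 0 < r → f r = r ^ (m * (n - 1)) * g r) →
        IsDimensionFunction f →
        ∀ X : Set (Fin n → Fin m → ℝ), X ⊆ unitCube n m → hausdorffF f X = 0 := by
  obtain ⟨ε, hε, hgε⟩ := exists_forall_eq_zero_of_antitone_pow_mul hg.1 hg.2.1
    (fun q => div_nonneg (hψ q) q.cast_nonneg) hnot (by omega : n + m - 1 ≠ 0) hmono
  refine ⟨ε, hε, hgε, fun f hf _ X _ => hausdorffF_eq_zero_of_eq_zero hε (fun r hr hrε => ?_) X⟩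
  rw [hf r hr, hgε r hr hrε, mul_zero]
end
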